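/- arXiv:1509.00079 — 4 statements merged into one kernel-verified Lean document; each statement's English description precedes it below -/
import Mathlib

section
/- For all x,y ∈ ℝ₊ with x ≠ y: (a) ∂/∂x [∫₀^∞ P_t^{[λ]}(x,y) dt] = −(2λ/π) ∫₀^π (x − y·cosθ)(sinθ)^{2λ−1} / (x²+y²−2xy·cosθ)^{λ+1} dθ =: R_{Δ_λ}(x,y); and (b) lim_{t→0⁺} Q_t^{[λ]}(x,y) = R_{Δ_λ}(x,y). -/
open MeasureTheory Real Set Filter

open Topology intervalIntegral

/-- The Poisson kernel for the Bessel operator `Δ_λ` (Weinstein's formula). -/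
noncomputable def Pker (lam t x y : ℝ) : ℝ :=
  (2 * lam * t / π) * ∫ θ in (0:ℝ)..π,
    (Real.sin θ ^ (2*lam - 1)) / ((x^2 + y^2 + t^2 - 2*x*y*Real.cos θ) ^ (lam + 1))

/-- The conjugate Poisson kernel for the Bessel operator `Δ_λ`. -/
noncomputable def Qker (lam t x y : ℝ) : ℝ :=
  -(2 * lam / π) * ∫ θ in (0:ℝ)..π,
    ((x - y * Real.cos θ) * Real.sin θ ^ (2*lam - 1)) /
      ((x^2 + y^2 + t^2 - 2*x*y*Real.cos θ) ^ (lam + 1))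

/-- The Riesz kernel `R_{Δ_λ}(x,y)`. -/
noncomputable def rieszKernel (lam x y : ℝ) : ℝ :=
  -(2 * lam / π) * ∫ θ in (0:ℝ)..π,
    ((x - y * Real.cos θ) * Real.sin θ ^ (2*lam - 1)) /
      ((x^2 + y^2 - 2*x*y*Real.cos θ) ^ (lam + 1))

/-!
With `D_t(θ) = x² + y² + t² - 2xy cos θ` we have `∂_t D_t^{-λ} = -2λt D_t^{-λ-1}`, so
`P_t = -(1/π) ∂_t Φ(t)` for `Φ(t) = ∫₀^π sin^{2λ-1} θ · D_t(θ)^{-λ} dθ`. As `Φ(t) → 0` when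
`t → ∞`, `∫₀^∞ P_t dt = Φ(0)/π`, and differentiating `Φ(0)` in `x` under the integral sign gives
`R_{Δ_λ}`. For `x ≠ y` everything is dominated because `D_t ≥ (x - y)²` and `sin^{2λ-1}` is
integrable (`2λ - 1 > -1`); the same domination gives `Q_t → Q_0 = R_{Δ_λ}`.
-/

open Topology intervalIntegral Interval

theorem intervalIntegrable_sin_rpow_zero_pi_div_two {c : ℝ} (hc : -1 < c) :
    IntervalIntegrable (fun θ => sin θ ^ c) volume 0 (π / 2) := by
  have hdom : IntervalIntegrable (fun θ : ℝ => 1 + (2 / π) ^ c * θ ^ c) volume 0 (π / 2) :=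
    intervalIntegrable_const.add ((intervalIntegrable_rpow' hc).const_mul _)
  refine hdom.mono_fun' (by fun_prop : AEMeasurable _ _).aestronglyMeasurable ?_
  rw [EventuallyLE, ae_restrict_iff' measurableSet_uIoc]
  refine .of_forall fun θ hθ => ?_
  obtain ⟨hθ0, hθπ⟩ : 0 < θ ∧ θ ≤ π / 2 := by rwa [uIoc_of_le (by positivity)] at hθ
  have hsin : 0 ≤ sin θ := sin_nonneg_of_nonneg_of_le_pi hθ0.le (by linarith [pi_pos])
  rw [norm_of_nonneg (rpow_nonneg hsin c)]
  rcases le_or_gt 0 c with hc0 | hc0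
  · have : 0 ≤ (2 / π) ^ c * θ ^ c := by positivity
    linarith [rpow_le_one hsin (sin_le_one θ) hc0]
  · -- Jordan's inequality `2θ/π ≤ sin θ` turns the singularity at `0` into that of `θ ^ c`.
    have h := rpow_le_rpow_of_nonpos (by positivity) (mul_le_sin hθ0.le hθπ) hc0.le
    rw [mul_rpow (by positivity) hθ0.le] at h
    linarith

theorem intervalIntegrable_sin_rpow {c : ℝ} (hc : -1 < c) :
    IntervalIntegrable (fun θ => sin θ ^ c) volume 0 π := by
  have h := intervalIntegrable_sin_rpow_zero_pi_div_two hc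
  have h' := h.comp_sub_left π
  simp only [sin_pi_sub, sub_zero, show π - π / 2 = π / 2 by ring] at h'
  exact h.trans h'.symm

section WeightedIntegral

variable {w : ℝ → ℝ} {a b : ℝ}

theorem hasDerivAt_integral_mul_of_deriv_le (hw : IntervalIntegrable w volume a b)
    {F F' : ℝ → ℝ → ℝ} {x₀ C : ℝ} (hF : ∀ᶠ x in 𝓝 x₀, Continuous (F x))
    (hF' : Continuous (F' x₀)) (hF'_le : ∀ᶠ x in 𝓝 x₀, ∀ θ, ‖F' x θ‖ ≤ C)
    (hderiv : ∀ᶠ x in 𝓝 x₀, ∀ θ, HasDerivAt (F · θ) (F' x θ) x) :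
    HasDerivAt (fun x => ∫ θ in a..b, w θ * F x θ) (∫ θ in a..b, w θ * F' x₀ θ) x₀ := by
  have hmeas {f : ℝ → ℝ} (hf : Continuous f) :
      AEStronglyMeasurable (fun θ => w θ * f θ) (volume.restrict (Ι a b)) :=
    (intervalIntegrable_iff.mp (hw.mul_continuousOn hf.continuousOn)).aestronglyMeasurable
  refine (intervalIntegral.hasDerivAt_integral_of_dominated_loc_of_deriv_le
    (bound := fun θ => ‖w θ‖ * C) (hF'_le.and hderiv) (hF.mono fun x hx => hmeas hx)
    (hw.mul_continuousOn hF.self_of_nhds.continuousOn) (hmeas hF') ?_ (hw.norm.mul_const C)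
    (.of_forall fun θ _ x hx => (hx.2 θ).const_mul (w θ))).2
  refine .of_forall fun θ _ x hx => ?_
  rw [norm_mul]
  exact mul_le_mul_of_nonneg_left (hx.1 θ) (norm_nonneg _)

theorem tendsto_integral_mul_of_dominated {ι : Type*} {l : Filter ι} [l.IsCountablyGenerated]
    (hw : IntervalIntegrable w volume a b) {F : ι → ℝ → ℝ} {f : ℝ → ℝ} {C : ℝ}
    (hF : ∀ᶠ i in l, Continuous (F i)) (hF_le : ∀ᶠ i in l, ∀ θ, ‖F i θ‖ ≤ C)
    (hlim : ∀ θ, Tendsto (F · θ) l (𝓝 (f θ))) :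
    Tendsto (fun i => ∫ θ in a..b, w θ * F i θ) l (𝓝 (∫ θ in a..b, w θ * f θ)) := by
  refine tendsto_integral_filter_of_dominated_convergence (fun θ => ‖w θ‖ * C)
    (hF.mono fun i hi => ?_) (hF_le.mono fun i hi => .of_forall fun θ _ => ?_)
    (hw.norm.mul_const C) (.of_forall fun θ _ => (hlim θ).const_mul (w θ))
  · exact (intervalIntegrable_iff.mp (hw.mul_continuousOn hi.continuousOn)).aestronglyMeasurable
  · rw [norm_mul]
    exact mul_le_mul_of_nonneg_left (hi θ) (norm_nonneg _)

end WeightedIntegral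

theorem norm_mul_rpow_le {a A D δ p : ℝ} (hδ : 0 < δ) (hD : δ ≤ D) (hp : p ≤ 0) (ha : ‖a‖ ≤ A) :
    ‖a * D ^ p‖ ≤ A * δ ^ p := by
  rw [norm_mul, norm_of_nonneg (rpow_nonneg (hδ.le.trans hD) _)]
  exact mul_le_mul ha (rpow_le_rpow_of_nonpos hδ hD hp) (rpow_nonneg (hδ.le.trans hD) _)
    ((norm_nonneg a).trans ha)

/-- The denominator of Weinstein's kernels: `|(x, 0, t) - (y cos θ, y sin θ, 0)|²`. -/
noncomputable def distSq (x y t θ : ℝ) : ℝ := x ^ 2 + y ^ 2 + t ^ 2 - 2 * x * y * cos θ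

section Kernels

variable {lam x y : ℝ}

theorem sq_sub_add_sq_le_distSq (hx : 0 ≤ x) (hy : 0 ≤ y) (t θ : ℝ) :
    (x - y) ^ 2 + t ^ 2 ≤ distSq x y t θ := by
  unfold distSq
  nlinarith [cos_le_one θ, mul_nonneg hx hy]

theorem sq_sub_le_distSq (hx : 0 ≤ x) (hy : 0 ≤ y) (t θ : ℝ) : (x - y) ^ 2 ≤ distSq x y t θ :=
  le_of_add_le_of_nonneg_left (sq_sub_add_sq_le_distSq hx hy t θ) (sq_nonneg t)

theorem distSq_nonneg (hx : 0 ≤ x) (hy : 0 ≤ y) (t θ : ℝ) : 0 ≤ distSq x y t θ :=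
  (sq_nonneg _).trans (sq_sub_le_distSq hx hy t θ)

theorem hasDerivAt_distSq_left (y t θ x : ℝ) :
    HasDerivAt (distSq · y t θ) (2 * x - 2 * y * cos θ) x := by
  unfold distSq
  exact ((((hasDerivAt_pow 2 x).add_const (y ^ 2)).add_const (t ^ 2)).sub
    ((((hasDerivAt_id' x).const_mul 2).mul_const y).mul_const (cos θ))).congr_deriv (by norm_num)

theorem hasDerivAt_distSq_param (x y θ t : ℝ) :
    HasDerivAt (distSq x y · θ) (2 * t) t := by
  unfold distSq
  exact (((hasDerivAt_pow 2 t).const_add (x ^ 2 + y ^ 2)).sub_const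
    (2 * x * y * cos θ)).congr_deriv (by norm_num)

theorem continuous_distSq_rpow {x y t : ℝ} (hpos : ∀ θ, 0 < distSq x y t θ) (r : ℝ) :
    Continuous fun θ => distSq x y t θ ^ r :=
  (by unfold distSq; fun_prop : Continuous (distSq x y t)).rpow_const fun θ => .inl (hpos θ).ne'

noncomputable def besselPotential (lam x y t : ℝ) : ℝ :=
  ∫ θ in (0:ℝ)..π, sin θ ^ (2 * lam - 1) * distSq x y t θ ^ (-lam)

theorem Pker_eq_integral (hx : 0 ≤ x) (hy : 0 ≤ y) (t : ℝ) :
    Pker lam t x y =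
      2 * lam * t / π * ∫ θ in (0:ℝ)..π, sin θ ^ (2 * lam - 1) * distSq x y t θ ^ (-lam - 1) := by
  refine congrArg _ (integral_congr fun θ _ => ?_)
  rw [show -lam - 1 = -(lam + 1) by ring, rpow_neg (distSq_nonneg hx hy t θ)]
  simp only [distSq, div_eq_mul_inv]

theorem Qker_eq_integral (hx : 0 ≤ x) (hy : 0 ≤ y) (t : ℝ) :
    Qker lam t x y = -(2 * lam / π) * ∫ θ in (0:ℝ)..π,
      sin θ ^ (2 * lam - 1) * ((x - y * cos θ) * distSq x y t θ ^ (-lam - 1)) := by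
  refine congrArg _ (integral_congr fun θ _ => ?_)
  rw [show -lam - 1 = -(lam + 1) by ring, rpow_neg (distSq_nonneg hx hy t θ)]
  simp only [distSq, div_eq_mul_inv]
  ring

theorem Qker_zero : Qker lam 0 x y = rieszKernel lam x y := by
  simp [Qker, rieszKernel]

theorem hasDerivAt_besselPotential_param (hlam : 0 < lam) (hx : 0 ≤ x) (hy : 0 ≤ y)
    (hxy : x ≠ y) (t : ℝ) :
    HasDerivAt (besselPotential lam x y) (-(π * Pker lam t x y)) t := by
  have hδ : 0 < (x - y) ^ 2 := by positivity [sub_ne_zero.mpr hxy]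
  have hDpos (s θ : ℝ) : 0 < distSq x y s θ := hδ.trans_le (sq_sub_le_distSq hx hy s θ)
  have hbound : ∀ᶠ s in 𝓝 t, ∀ θ, ‖2 * s * -lam * distSq x y s θ ^ (-lam - 1)‖
      ≤ 2 * (|t| + 1) * lam * ((x - y) ^ 2) ^ (-lam - 1) := by
    filter_upwards [continuous_abs.tendsto t |>.eventually_lt_const (lt_add_one |t|)]
      with s hs θ
    refine norm_mul_rpow_le hδ (sq_sub_le_distSq hx hy s θ) (by linarith) ?_
    simp only [norm_mul, norm_neg, norm_eq_abs, abs_two, abs_of_pos hlam]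
    nlinarith [abs_nonneg s]
  have h := hasDerivAt_integral_mul_of_deriv_le (intervalIntegrable_sin_rpow (c := 2 * lam - 1)
    (by linarith)) (.of_forall fun s => continuous_distSq_rpow (hDpos s) (-lam))
    (continuous_const.mul (continuous_distSq_rpow (hDpos t) _)) hbound
    (.of_forall fun s θ => (hasDerivAt_distSq_param x y θ s).rpow_const (.inl (hDpos s θ).ne'))
  refine h.congr_deriv ?_
  rw [Pker_eq_integral hx hy, ← mul_assoc, mul_div_cancel₀ _ pi_ne_zero,
    ← intervalIntegral.integral_const_mul, ← intervalIntegral.integral_neg]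
  exact integral_congr fun θ _ => by ring

theorem tendsto_besselPotential_atTop (hlam : 0 < lam) (hx : 0 ≤ x) (hy : 0 ≤ y) :
    Tendsto (besselPotential lam x y) atTop (𝓝 0) := by
  have hD (s θ : ℝ) : s ^ 2 ≤ distSq x y s θ :=
    le_of_add_le_of_nonneg_right (sq_sub_add_sq_le_distSq hx hy s θ) (sq_nonneg _)
  have hbig : ∀ᶠ s in atTop, ∀ θ, 1 ≤ distSq x y s θ := by
    filter_upwards [eventually_ge_atTop 1] with s hs θ
    nlinarith [hD s θ]
  have h := tendsto_integral_mul_of_dominated (intervalIntegrable_sin_rpow (c := 2 * lam - 1)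
    (by linarith)) (C := 1)
    (hbig.mono fun s hs => continuous_distSq_rpow (fun θ => one_pos.trans_le (hs θ)) (-lam))
    (hbig.mono fun s hs θ => ?_)
    (fun θ => (tendsto_rpow_neg_atTop hlam).comp
      (tendsto_atTop_mono (hD · θ) (tendsto_pow_atTop two_ne_zero)))
  · simp only [mul_zero, intervalIntegral.integral_zero] at h
    exact h
  · rw [norm_of_nonneg (rpow_nonneg (zero_le_one.trans (hs θ)) _)]
    exact rpow_le_one_of_one_le_of_nonpos (hs θ) (by linarith)

theorem Pker_nonneg (hlam : 0 ≤ lam) (hx : 0 ≤ x) (hy : 0 ≤ y) {t : ℝ} (ht : 0 ≤ t) :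
    0 ≤ Pker lam t x y := by
  rw [Pker_eq_integral hx hy]
  refine mul_nonneg (by positivity) (integral_nonneg pi_pos.le fun θ hθ => ?_)
  exact mul_nonneg (rpow_nonneg (sin_nonneg_of_nonneg_of_le_pi hθ.1 hθ.2) _)
    (rpow_nonneg (distSq_nonneg hx hy t θ) _)

theorem integral_Pker (hlam : 0 < lam) (hx : 0 ≤ x) (hy : 0 ≤ y) (hxy : x ≠ y) :
    ∫ t in Ioi 0, Pker lam t x y = besselPotential lam x y 0 / π := by
  have hderiv (t : ℝ) : HasDerivAt (fun s => -besselPotential lam x y s / π) (Pker lam t x y) t :=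
    ((hasDerivAt_besselPotential_param hlam hx hy hxy t).neg.div_const π).congr_deriv
      (by field_simp)
  rw [integral_Ioi_of_hasDerivAt_of_nonneg (hderiv 0).continuousAt.continuousWithinAt
    (fun t _ => hderiv t) (fun t ht => Pker_nonneg hlam.le hx hy ht.le)
    (by simpa using (tendsto_besselPotential_atTop hlam hx hy).neg.div_const π)]
  ring

theorem hasDerivAt_besselPotential_left (hlam : 0 < lam) (hx : 0 < x) (hy : 0 ≤ y)
    (hxy : x ≠ y) :
    HasDerivAt (fun u => besselPotential lam u y 0) (π * rieszKernel lam x y) x := by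
  have hxy2 : 0 < (x - y) ^ 2 := by positivity [sub_ne_zero.mpr hxy]
  obtain ⟨δ, hδ, hδx⟩ : ∃ δ, 0 < δ ∧ δ < (x - y) ^ 2 := ⟨_, half_pos hxy2, half_lt_self hxy2⟩
  have hnear : ∀ᶠ u in 𝓝 x, 0 < u ∧ u < 2 * x ∧ ∀ θ, δ ≤ distSq u y 0 θ := by
    filter_upwards [eventually_gt_nhds hx, eventually_lt_nhds (by linarith : x < 2 * x),
      (by fun_prop : Continuous fun u => (u - y) ^ 2).tendsto x |>.eventually_const_lt
        hδx] with u hu0 hu2x hδu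
    exact ⟨hu0, hu2x, fun θ => hδu.le.trans (sq_sub_le_distSq hu0.le hy 0 θ)⟩
  have hbound : ∀ᶠ u in 𝓝 x, ∀ θ, ‖(2 * u - 2 * y * cos θ) * -lam * distSq u y 0 θ ^ (-lam - 1)‖
      ≤ (4 * x + 2 * y) * lam * δ ^ (-lam - 1) := by
    filter_upwards [hnear] with u ⟨hu0, hu2x, hδu⟩ θ
    refine norm_mul_rpow_le hδ (hδu θ) (by linarith) ?_
    rw [norm_mul, norm_neg, norm_of_nonneg hlam.le, norm_eq_abs]
    refine mul_le_mul_of_nonneg_right (abs_le.mpr ⟨?_, ?_⟩) hlam.le <;>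
      nlinarith [cos_le_one θ, neg_one_le_cos θ]
  have h := hasDerivAt_integral_mul_of_deriv_le (intervalIntegrable_sin_rpow (c := 2 * lam - 1)
    (by linarith))
    (hnear.mono fun u hu => continuous_distSq_rpow (fun θ => hδ.trans_le (hu.2.2 θ)) (-lam))
    ((by fun_prop : Continuous fun θ => (2 * x - 2 * y * cos θ) * -lam).mul
      (continuous_distSq_rpow (fun θ => hδ.trans_le (hnear.self_of_nhds.2.2 θ)) _)) hbound
    (hnear.mono fun u hu θ => (hasDerivAt_distSq_left y 0 θ u).rpow_const
      (.inl (hδ.trans_le (hu.2.2 θ)).ne'))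
  refine h.congr_deriv ?_
  rw [← Qker_zero, Qker_eq_integral hx.le hy, ← mul_assoc,
    show π * -(2 * lam / π) = -2 * lam by field_simp, ← intervalIntegral.integral_const_mul]
  exact integral_congr fun θ _ => by ring

theorem continuous_Qker (hlam : 0 < lam) (hx : 0 ≤ x) (hy : 0 ≤ y) (hxy : x ≠ y) :
    Continuous fun t => Qker lam t x y := by
  have hδ : 0 < (x - y) ^ 2 := by positivity [sub_ne_zero.mpr hxy]
  have hDpos (t θ : ℝ) : 0 < distSq x y t θ := hδ.trans_le (sq_sub_le_distSq hx hy t θ)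
  have hbound (t θ : ℝ) : ‖(x - y * cos θ) * distSq x y t θ ^ (-lam - 1)‖
      ≤ (x + y) * ((x - y) ^ 2) ^ (-lam - 1) := by
    refine norm_mul_rpow_le hδ (sq_sub_le_distSq hx hy t θ) (by linarith) ?_
    rw [norm_eq_abs, abs_le]
    constructor <;> nlinarith [cos_le_one θ, neg_one_le_cos θ]
  simp_rw [Qker_eq_integral hx hy]
  refine continuous_const.mul (continuous_iff_continuousAt.2 fun t₀ => ?_)
  exact tendsto_integral_mul_of_dominated (intervalIntegrable_sin_rpow (c := 2 * lam - 1)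
    (by linarith))
    (.of_forall fun t => (by fun_prop : Continuous fun θ => x - y * cos θ).mul
      (continuous_distSq_rpow (hDpos t) _))
    (.of_forall (hbound · ·))
    (fun θ => (continuous_const.mul ((by unfold distSq; fun_prop : Continuous (distSq x y · θ))
      |>.rpow_const fun t => .inl (hDpos t θ).ne')).tendsto t₀)

end Kernels

/-- For `x ≠ y` in `ℝ₊`: (a) `∂_x ∫₀^∞ P_t^{[λ]}(x,y) dt = R_{Δ_λ}(x,y)`, and
(b) `lim_{t→0⁺} Q_t^{[λ]}(x,y) = R_{Δ_λ}(x,y)`. -/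
theorem riesz_kernel_eq_deriv_and_limit (lam : ℝ) (hlam : 0 < lam)
    (x y : ℝ) (hx : 0 < x) (hy : 0 < y) (hxy : x ≠ y) :
    HasDerivAt (fun u : ℝ => ∫ t in Set.Ioi (0:ℝ), Pker lam t u y)
      (rieszKernel lam x y) x ∧
    Filter.Tendsto (fun t => Qker lam t x y) (nhdsWithin 0 (Set.Ioi 0))
      (nhds (rieszKernel lam x y)) := by
  refine ⟨?_, ?_⟩
  · have h := (hasDerivAt_besselPotential_left hlam hx hy.le hxy).div_const π
    rw [mul_div_cancel_left₀ _ pi_ne_zero] at h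
    refine h.congr_of_eventuallyEq ?_
    filter_upwards [eventually_gt_nhds hx, eventually_ne_nhds hxy] with u hu huy
    exact integral_Pker hlam hu.le hy.le huy
  · rw [← Qker_zero]
    exact ((continuous_Qker hlam hx.le hy.le hxy).tendsto 0).mono_left nhdsWithin_le_nhds
end

section
/- For every k ∈ (0,∞) with k ≠ 1, ∫₀^{π/2} θ^{2λ−1} / [ (1−k)² + kθ² ]^{λ+1} dθ = k^{−λ}(1−k)^{−2} · ( 1/(2λ) − T(k) ), where T(k) := ∫_{π√k/(2|1−k|)}^∞ β^{2λ−1}/(1+β²)^{λ+1} dβ satisfies 0 < T(k) < (2/π²)·(k−1)²/k. -/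
/-!
Everything rests on the elementary antiderivative `(θ² / (a + bθ²))^λ / (2λa)` of
`θ^(2λ-1) / (a + bθ²)^(λ+1)`. It evaluates the integral over `[0, π/2]` with `a = (1-k)²`,
`b = k`, and the tail `T(c)` over `(c, ∞)` with `a = b = 1`: writing `u = c² / (1 + c²)`,
`T(c) = (1 - u^λ) / (2λ)`. The identity is then algebra, `0 < T(c)` is `u < 1`, and the upper
bound `T(c) < 1 / (2c²) = (2/π²)(k-1)²/k` is `u^λ ≥ 1 + λ log u > 1 - λ (u⁻¹ - 1)`.
-/

open MeasureTheory Real Set Filter Topology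

section

variable {lam a b c X : ℝ}

theorem hasDerivAt_rpow_sq_div_quadratic (hlam : lam ≠ 0) (ha : a ≠ 0) {x : ℝ} (hx : 0 < x)
    (hD : 0 < a + b * x ^ 2) :
    HasDerivAt (fun θ : ℝ => (θ ^ 2 / (a + b * θ ^ 2)) ^ lam / (2 * lam * a))
      (x ^ (2 * lam - 1) / (a + b * x ^ 2) ^ (lam + 1)) x := by
  have hq : HasDerivAt (fun θ : ℝ => θ ^ 2 / (a + b * θ ^ 2))
      (2 * a * x / (a + b * x ^ 2) ^ 2) x := by
    refine ((hasDerivAt_pow 2 x).div (((hasDerivAt_pow 2 x).const_mul b).const_add a)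
      hD.ne').congr_deriv ?_
    simp only [Nat.cast_ofNat]
    ring
  refine ((hq.rpow_const (p := lam) (Or.inl (by positivity))).div_const
    (2 * lam * a)).congr_deriv ?_
  have hx2 : x ^ (2 * lam - 1) = (x ^ 2) ^ (lam - 1) * x := by
    rw [← rpow_natCast x 2, ← rpow_mul hx.le, ← rpow_add_one hx.ne']
    congr 1
    push_cast
    ring
  have hD2 : (a + b * x ^ 2) ^ (lam + 1) = (a + b * x ^ 2) ^ (lam - 1) * (a + b * x ^ 2) ^ 2 := by
    rw [← rpow_natCast (a + b * x ^ 2) 2, ← rpow_add hD]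
    congr 1
    push_cast
    ring
  rw [hx2, hD2, div_rpow (by positivity) hD.le]
  have : (a + b * x ^ 2) ^ (lam - 1) ≠ 0 := (rpow_pos_of_pos hD _).ne'
  field_simp

theorem integral_rpow_div_quadratic_rpow (hlam : 0 < lam) (ha : 0 < a) (hb : 0 ≤ b)
    (hX : 0 < X) :
    ∫ θ in (0 : ℝ)..X, θ ^ (2 * lam - 1) / (a + b * θ ^ 2) ^ (lam + 1) =
      (X ^ 2 / (a + b * X ^ 2)) ^ lam / (2 * lam * a) := by
  have hcont : ContinuousOn (fun θ : ℝ => (θ ^ 2 / (a + b * θ ^ 2)) ^ lam / (2 * lam * a))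
      (Icc 0 X) := by
    refine Continuous.continuousOn ?_
    refine (Continuous.rpow_const ?_ fun _ => Or.inr hlam.le).div_const _
    exact (continuous_pow 2).div (by fun_prop) fun θ => by positivity
  have hderiv : ∀ x ∈ Ioo 0 X, HasDerivAt
      (fun θ : ℝ => (θ ^ 2 / (a + b * θ ^ 2)) ^ lam / (2 * lam * a))
      (x ^ (2 * lam - 1) / (a + b * x ^ 2) ^ (lam + 1)) x := fun x hx =>
    hasDerivAt_rpow_sq_div_quadratic hlam.ne' ha.ne' hx.1 (by positivity)
  have hint := intervalIntegral.intervalIntegrable_deriv_of_nonneg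
    (by rwa [uIcc_of_le hX.le]) (by simpa [hX.le] using hderiv)
    (fun x hx => by simp only [hX.le, min_eq_left, max_eq_right] at hx; have := hx.1; positivity)
  rw [intervalIntegral.integral_eq_sub_of_hasDerivAt_of_le hX.le hcont hderiv hint]
  simp [zero_rpow hlam.ne']

theorem integral_Ioi_rpow_div_one_add_sq_rpow (hlam : 0 < lam) (hc : 0 < c) :
    ∫ β in Ioi c, β ^ (2 * lam - 1) / (1 + β ^ 2) ^ (lam + 1) =
      (1 - (c ^ 2 / (1 + c ^ 2)) ^ lam) / (2 * lam) := by
  have hderiv : ∀ x ∈ Ici c,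
      HasDerivAt (fun β : ℝ => (β ^ 2 / (1 + β ^ 2)) ^ lam / (2 * lam))
      (x ^ (2 * lam - 1) / (1 + x ^ 2) ^ (lam + 1)) x := fun x hx => by
    simpa using hasDerivAt_rpow_sq_div_quadratic (b := 1) hlam.ne' one_ne_zero
      (hc.trans_le hx) (by positivity)
  have hlim : Tendsto (fun β : ℝ => β ^ 2 / (1 + β ^ 2)) atTop (𝓝 1) := by
    have : Tendsto (fun β : ℝ => 1 - (1 + β ^ 2)⁻¹) atTop (𝓝 (1 - 0)) :=
      tendsto_const_nhds.sub (tendsto_atTop_add_const_left _ 1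
        (tendsto_pow_atTop two_ne_zero)).inv_tendsto_atTop
    refine (sub_zero (1 : ℝ) ▸ this).congr fun β => ?_
    field_simp
    ring
  have hlim' := (hlim.rpow_const (p := lam) (Or.inr hlam.le)).div_const (2 * lam)
  rw [one_rpow] at hlim'
  rw [integral_Ioi_of_hasDerivAt_of_nonneg' hderiv (fun x hx => by
    have := hc.trans hx; positivity) hlim', sub_div]

theorem one_sub_rpow_lt_mul_inv_sub_one {u : ℝ} (hlam : 0 < lam) (hu : 0 < u) (hu1 : u ≠ 1) :
    1 - u ^ lam < lam * (u⁻¹ - 1) := by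
  have hlog : 1 - u⁻¹ < log u := by
    have := log_lt_sub_one_of_pos (inv_pos.2 hu) (inv_ne_one.2 hu1)
    rw [log_inv] at this
    linarith
  have hexp := add_one_le_exp (log u * lam)
  rw [← rpow_def_of_pos hu] at hexp
  nlinarith

theorem integral_Ioi_rpow_div_one_add_sq_rpow_pos (hlam : 0 < lam) (hc : 0 < c) :
    0 < ∫ β in Ioi c, β ^ (2 * lam - 1) / (1 + β ^ 2) ^ (lam + 1) := by
  rw [integral_Ioi_rpow_div_one_add_sq_rpow hlam hc]
  have hu : c ^ 2 / (1 + c ^ 2) < 1 := (div_lt_one (by positivity)).2 (by linarith)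
  have := rpow_lt_one (by positivity) hu hlam
  exact div_pos (by linarith) (by positivity)

theorem integral_Ioi_rpow_div_one_add_sq_rpow_lt (hlam : 0 < lam) (hc : 0 < c) :
    ∫ β in Ioi c, β ^ (2 * lam - 1) / (1 + β ^ 2) ^ (lam + 1) < 1 / (2 * c ^ 2) := by
  rw [integral_Ioi_rpow_div_one_add_sq_rpow hlam hc,
    div_lt_div_iff₀ (by positivity) (by positivity)]
  have hu : c ^ 2 / (1 + c ^ 2) ≠ 1 := by
    rw [Ne, div_eq_one_iff_eq (by positivity)]
    linarith
  have key := one_sub_rpow_lt_mul_inv_sub_one hlam (by positivity) hu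
  rw [inv_div, add_div, div_self (by positivity), add_sub_cancel_right] at key
  calc (1 - (c ^ 2 / (1 + c ^ 2)) ^ lam) * (2 * c ^ 2) < lam * (1 / c ^ 2) * (2 * c ^ 2) := by
        gcongr
    _ = 1 * (2 * lam) := by field_simp

theorem integral_rpow_div_quadratic_rpow_eq_tail (hlam : 0 < lam) (ha : 0 < a)
    (hb : 0 < b) (hX : 0 < X) (hc : 0 < c) (hcX : c ^ 2 = b * X ^ 2 / a) :
    ∫ θ in (0 : ℝ)..X, θ ^ (2 * lam - 1) / (a + b * θ ^ 2) ^ (lam + 1) =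
      b ^ (-lam) * a⁻¹ *
        (1 / (2 * lam) - ∫ β in Ioi c, β ^ (2 * lam - 1) / (1 + β ^ 2) ^ (lam + 1)) := by
  rw [integral_rpow_div_quadratic_rpow hlam ha hb.le hX,
    integral_Ioi_rpow_div_one_add_sq_rpow hlam hc]
  have hbase : X ^ 2 / (a + b * X ^ 2) = c ^ 2 / (1 + c ^ 2) / b := by
    rw [hcX]
    field_simp
  rw [hbase, div_rpow (by positivity) hb.le, rpow_neg hb.le]
  field_simp
  ring

end

/-- For every `k ∈ (0,∞)` with `k ≠ 1`,
`∫₀^{π/2} θ^{2λ-1}/[(1-k)² + kθ²]^{λ+1} dθ = k^{-λ} (1-k)^{-2} (1/(2λ) - T(k))`,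
where `T(k) = ∫_{π√k/(2|1-k|)}^∞ β^{2λ-1}/(1+β²)^{λ+1} dβ` satisfies
`0 < T(k) < (2/π²)(k-1)²/k`. -/
theorem beta_integral_identity (lam : ℝ) (hlam : 0 < lam) (k : ℝ) (hk : 0 < k) (hk1 : k ≠ 1) :
    (∫ θ in (0:ℝ)..(π/2), θ ^ (2*lam - 1) / (((1 - k)^2 + k * θ^2) ^ (lam + 1))) =
      k ^ (-lam) * ((1 - k)^2)⁻¹ *
        (1/(2*lam) - ∫ β in Set.Ioi (π * Real.sqrt k / (2 * |1 - k|)),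
          β ^ (2*lam - 1) / ((1 + β^2) ^ (lam + 1))) ∧
    0 < (∫ β in Set.Ioi (π * Real.sqrt k / (2 * |1 - k|)),
          β ^ (2*lam - 1) / ((1 + β^2) ^ (lam + 1))) ∧
    (∫ β in Set.Ioi (π * Real.sqrt k / (2 * |1 - k|)),
          β ^ (2*lam - 1) / ((1 + β^2) ^ (lam + 1))) < (2/π^2) * (k - 1)^2 / k := by
  have hk1' : 1 - k ≠ 0 := sub_ne_zero.2 (Ne.symm hk1)
  set c := π * √k / (2 * |1 - k|)
  have hc : 0 < c := by positivity
  have hc2 : c ^ 2 = k * (π / 2) ^ 2 / (1 - k) ^ 2 := by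
    rw [div_pow, mul_pow, mul_pow, sq_sqrt hk.le, sq_abs]
    field_simp
  have hbound : (2 / π ^ 2) * (k - 1) ^ 2 / k = 1 / (2 * c ^ 2) := by
    rw [hc2]
    field_simp
    ring
  exact ⟨integral_rpow_div_quadratic_rpow_eq_tail hlam (by positivity) hk (by positivity) hc hc2,
    integral_Ioi_rpow_div_one_add_sq_rpow_pos hlam hc,
    hbound ▸ integral_Ioi_rpow_div_one_add_sq_rpow_lt hlam hc⟩
end

section
/- There exists a constant C>0 (depending only on λ) such that for all k ∈ (1/2,2) with k ≠ 1, ∫₀^{π/2} θ^{2λ+1} / [ (1−k)² + kθ² ]^{λ+1} dθ ≤ C·( log₊( √k/|k−1| ) + 1 ), where log₊ t := max(log t, 0). -/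
open MeasureTheory Real Set Filter

/-- There exists `C > 0` (depending only on `λ`) such that for all `k ∈ (1/2,2)`, `k ≠ 1`,
`∫₀^{π/2} θ^{2λ+1}/[(1-k)² + kθ²]^{λ+1} dθ ≤ C (log₊(√k/|k-1|) + 1)`. -/
theorem log_integral_estimate (lam : ℝ) (hlam : 0 < lam) :
    ∃ C : ℝ, 0 < C ∧ ∀ k : ℝ, 1/2 < k → k < 2 → k ≠ 1 →
      (∫ θ in (0:ℝ)..(π/2), θ ^ (2*lam + 1) / (((1 - k)^2 + k * θ^2) ^ (lam + 1))) ≤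
        C * (max (Real.log (Real.sqrt k / |k - 1|)) 0 + 1) := by
  refine ⟨3 * (2:ℝ) ^ (lam + 1), by positivity, ?_⟩
  intro k hk1 hk2 hk3
  have hk0 : (0:ℝ) < k := by linarith
  set a := |k - 1| with ha_def
  have ha : 0 < a := abs_pos.2 (sub_ne_zero.2 hk3)
  have ha2 : a ^ 2 = (1 - k) ^ 2 := by
    rw [sq_abs]; ring
  have ha1 : a < 1 := abs_sub_lt_iff.2 ⟨by linarith, by linarith⟩
  have hπ : (1:ℝ) < π / 2 := by
    have := Real.pi_gt_three; linarith
  have haπ : a < π / 2 := lt_trans ha1 hπ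
  -- the integrand is continuous
  have hnum : Continuous fun θ : ℝ => θ ^ (2 * lam + 1) :=
    continuous_id.rpow_const (fun x => Or.inr (by linarith))
  have hDpos : ∀ θ : ℝ, 0 < (1 - k) ^ 2 + k * θ ^ 2 := by
    intro θ
    have h1 : 0 < (1 - k) ^ 2 := by rw [← ha2]; positivity
    nlinarith [sq_nonneg θ]
  have hden : Continuous fun θ : ℝ => ((1 - k) ^ 2 + k * θ ^ 2) ^ (lam + 1) :=
    (by continuity : Continuous fun θ : ℝ => (1 - k) ^ 2 + k * θ ^ 2).rpow_const
      (fun x => Or.inr (by linarith))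
  have hdenpos : ∀ θ : ℝ, 0 < ((1 - k) ^ 2 + k * θ ^ 2) ^ (lam + 1) := fun θ =>
    Real.rpow_pos_of_pos (hDpos θ) _
  have hf : Continuous fun θ : ℝ => θ ^ (2 * lam + 1) / ((1 - k) ^ 2 + k * θ ^ 2) ^ (lam + 1) :=
    hnum.div hden (fun θ => (hdenpos θ).ne')
  -- split the integral
  have hsplit :
      (∫ θ in (0:ℝ)..(π/2), θ ^ (2*lam + 1) / (((1 - k)^2 + k * θ^2) ^ (lam + 1)))
        = (∫ θ in (0:ℝ)..a, θ ^ (2*lam + 1) / (((1 - k)^2 + k * θ^2) ^ (lam + 1)))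
          + ∫ θ in a..(π/2), θ ^ (2*lam + 1) / (((1 - k)^2 + k * θ^2) ^ (lam + 1)) :=
    (intervalIntegral.integral_add_adjacent_intervals
      (hf.intervalIntegrable _ _) (hf.intervalIntegrable _ _)).symm
  -- bound the first piece
  have hbound1 :
      (∫ θ in (0:ℝ)..a, θ ^ (2*lam + 1) / (((1 - k)^2 + k * θ^2) ^ (lam + 1))) ≤ 1 := by
    have hmono : (∫ θ in (0:ℝ)..a, θ ^ (2*lam + 1) / (((1 - k)^2 + k * θ^2) ^ (lam + 1)))
        ≤ ∫ θ in (0:ℝ)..a, θ ^ (2*lam + 1) / (a ^ 2) ^ (lam + 1) := by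
      apply intervalIntegral.integral_mono_on ha.le (hf.intervalIntegrable _ _)
      · exact ((hnum.div_const _).intervalIntegrable _ _)
      · intro θ hθ
        have hθ0 : 0 ≤ θ := hθ.1
        have hnn : 0 ≤ θ ^ (2 * lam + 1) := Real.rpow_nonneg hθ0 _
        apply div_le_div_of_nonneg_left hnn (Real.rpow_pos_of_pos (by positivity) _)
        apply Real.rpow_le_rpow (by positivity) _ (by linarith)
        nlinarith [sq_nonneg θ]
    rw [intervalIntegral.integral_div, integral_rpow (Or.inl (by linarith))] at hmono
    have hz : (0:ℝ) ^ (2 * lam + 1 + 1) = 0 := Real.zero_rpow (by linarith)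
    have hpow : (a ^ 2) ^ (lam + 1) = a ^ (2 * lam + 1 + 1) := by
      rw [← Real.rpow_natCast a 2, ← Real.rpow_mul ha.le]
      norm_num; ring_nf
    have hapos : 0 < a ^ (2 * lam + 1 + 1) := Real.rpow_pos_of_pos ha _
    rw [hz, hpow] at hmono
    have : (a ^ (2 * lam + 1 + 1) - 0) / (2 * lam + 1 + 1) / a ^ (2 * lam + 1 + 1)
        = 1 / (2 * lam + 1 + 1) := by
      field_simp
      ring
    rw [this] at hmono
    have h1 : 1 / (2 * lam + 1 + 1) ≤ 1 := by
      rw [div_le_one (by linarith)]; linarith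
    linarith
  -- bound the second piece
  have hbound2 :
      (∫ θ in a..(π/2), θ ^ (2*lam + 1) / (((1 - k)^2 + k * θ^2) ^ (lam + 1)))
        ≤ (2:ℝ) ^ (lam + 1) * Real.log ((π/2) / a) := by
    have hmono : (∫ θ in a..(π/2), θ ^ (2*lam + 1) / (((1 - k)^2 + k * θ^2) ^ (lam + 1)))
        ≤ ∫ θ in a..(π/2), (2:ℝ) ^ (lam + 1) * θ⁻¹ := by
      apply intervalIntegral.integral_mono_on haπ.le (hf.intervalIntegrable _ _)
      · apply ContinuousOn.intervalIntegrable
        apply ContinuousOn.mul continuousOn_const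
        apply ContinuousOn.inv₀ continuousOn_id
        intro x hx
        rw [uIcc_of_le haπ.le] at hx
        exact ne_of_gt (lt_of_lt_of_le ha hx.1)
      · intro θ hθ
        have hθ0 : 0 < θ := lt_of_lt_of_le ha hθ.1
        have key : θ ^ (2 * lam + 1) / ((1 - k) ^ 2 + k * θ ^ 2) ^ (lam + 1)
            ≤ θ ^ (2 * lam + 1) / (θ ^ 2 / 2) ^ (lam + 1) := by
          apply div_le_div_of_nonneg_left (Real.rpow_nonneg hθ0.le _)
            (Real.rpow_pos_of_pos (by positivity) _)
          apply Real.rpow_le_rpow (by positivity) _ (by linarith)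
          nlinarith [sq_nonneg (1 - k)]
        have heq : θ ^ (2 * lam + 1) / (θ ^ 2 / 2) ^ (lam + 1) = (2:ℝ) ^ (lam + 1) * θ⁻¹ := by
          rw [Real.div_rpow (by positivity) (by norm_num)]
          have h1 : (θ ^ 2 : ℝ) ^ (lam + 1) = θ ^ (2 * lam + 1) * θ := by
            rw [← Real.rpow_natCast θ 2, ← Real.rpow_mul hθ0.le]
            norm_num
            rw [show 2 * (lam + 1) = (2 * lam + 1) + 1 by ring,
              Real.rpow_add hθ0, Real.rpow_one]
          rw [h1]
          have hne : θ ^ (2 * lam + 1) ≠ 0 := (Real.rpow_pos_of_pos hθ0 _).ne'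
          field_simp
        rw [heq] at key
        exact key
    rw [intervalIntegral.integral_const_mul, integral_inv
      (by rw [uIcc_of_le haπ.le]; exact fun h => absurd h.1 (not_le.2 ha))] at hmono
    exact hmono
  -- the log bound
  have hL : Real.log ((π/2) / a) ≤ 2 + max (Real.log (Real.sqrt k / a)) 0 := by
    have hsk : (1:ℝ)/2 ≤ Real.sqrt k := by
      rw [show (1:ℝ)/2 = Real.sqrt (1/4) by
        rw [show (1:ℝ)/4 = (1/2)^2 by norm_num, Real.sqrt_sq (by norm_num)]]
      exact Real.sqrt_le_sqrt (by linarith)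
    have hsk0 : 0 < Real.sqrt k := lt_of_lt_of_le (by norm_num) hsk
    have h1 : Real.log ((π/2) / a) = Real.log (π/2) - Real.log a :=
      Real.log_div (by positivity) ha.ne'
    have h2 : Real.log (Real.sqrt k / a) = Real.log (Real.sqrt k) - Real.log a :=
      Real.log_div hsk0.ne' ha.ne'
    have h3 : Real.log (π/2) ≤ 1 := by
      have : Real.log (π/2) ≤ Real.log 2 :=
        Real.log_le_log (by positivity) (by have := Real.pi_lt_d2; linarith)
      have := Real.log_two_lt_d9
      linarith
    have h4 : (-1:ℝ) ≤ Real.log (Real.sqrt k) := by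
      have : Real.log (1/2) ≤ Real.log (Real.sqrt k) :=
        Real.log_le_log (by norm_num) hsk
      rw [show (1:ℝ)/2 = 2⁻¹ by norm_num, Real.log_inv] at this
      have := Real.log_two_lt_d9
      linarith
    have h5 : Real.log (Real.sqrt k / a) ≤ max (Real.log (Real.sqrt k / a)) 0 := le_max_left _ _
    linarith
  -- put everything together
  have hP2 : (2:ℝ) ≤ (2:ℝ) ^ (lam + 1) := by
    nth_rewrite 1 [show (2:ℝ) = (2:ℝ) ^ (1:ℝ) by rw [Real.rpow_one]]
    exact Real.rpow_le_rpow_left_iff (by norm_num) |>.2 (by linarith)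
  have hLnn : 0 ≤ max (Real.log (Real.sqrt k / a)) 0 := le_max_right _ _
  rw [hsplit]
  have hfinal : (2:ℝ) ^ (lam + 1) * Real.log ((π/2) / a)
      ≤ (2:ℝ) ^ (lam + 1) * (2 + max (Real.log (Real.sqrt k / a)) 0) :=
    mul_le_mul_of_nonneg_left hL (by positivity)
  have := hbound2.trans hfinal
  set L := max (Real.log (Real.sqrt k / a)) 0
  set P := (2:ℝ) ^ (lam + 1)
  nlinarith [hbound1, this, mul_nonneg (by linarith : (0:ℝ) ≤ P) hLnn]
end

section
/- The function b₀(x) := log x belongs to BMO(ℝ₊,dx), i.e. sup_I (1/|I|)∫_I |b₀ − (b₀)_I| dx < ∞ where the supremum is over bounded subintervals I of ℝ₊; but its odd extension (b₀)_o, defined by (b₀)_o(x) = log x for x>0 and (b₀)_o(x) = −log(−x) for x<0, does not belong to BMO(ℝ,dx), i.e. sup_J (1/|J|)∫_J |(b₀)_o − ((b₀)_o)_J| dx = ∞ where the supremum is over bounded intervals J ⊂ ℝ. In particular, the space BMO_o(ℝ₊,dx) := { f locally integrable on ℝ₊ : the odd extension f_o ∈ BMO(ℝ) } is a proper subset of BMO(ℝ₊,dx).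 -/
open MeasureTheory Real Set Filter

/-- The odd extension of `f : ℝ₊ → ℝ`: `f_o(x) = f(x)` for `x > 0`, `f_o(x) = -f(-x)` else. -/
noncomputable def oddExt (f : ℝ → ℝ) : ℝ → ℝ :=
  fun x => if 0 < x then f x else -f (-x)

/-- `f ∈ BMO(ℝ₊, dx)`: the mean oscillation of `f` over bounded subintervals of `ℝ₊`
is uniformly bounded. -/
def MemBMOpos (f : ℝ → ℝ) : Prop :=
  ∃ C : ℝ, ∀ u v : ℝ, 0 ≤ u → u < v →
    (v - u)⁻¹ * ∫ x in Set.Ioo u v,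
      |f x - (v - u)⁻¹ * ∫ t in Set.Ioo u v, f t| ≤ C

/-- `f ∈ BMO(ℝ, dx)`: the mean oscillation of `f` over bounded intervals of `ℝ`
is uniformly bounded. -/
def MemBMOreal (f : ℝ → ℝ) : Prop :=
  ∃ C : ℝ, ∀ u v : ℝ, u < v →
    (v - u)⁻¹ * ∫ x in Set.Ioo u v,
      |f x - (v - u)⁻¹ * ∫ t in Set.Ioo u v, f t| ≤ C

/-!
Mean oscillation is at most twice the mean distance to any constant. On `(u, v) ⊆ (0, ∞)` take
the constant `log v`: the mean of `log v - log x` over `(u, v)` is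
`1 - u (log v - log u) / (v - u) ≤ 1`, so `log` has mean oscillation at most `2`. The odd
extension of `log` is odd, so its mean over `(-a, a)` vanishes and its mean oscillation there is
the mean of `|log|` over `(0, a)`, which is `1 - log a` for `a ≤ 1` and hence unbounded as
`a → 0`.
-/

noncomputable def meanOscillation (f : ℝ → ℝ) (u v : ℝ) : ℝ :=
  (v - u)⁻¹ * ∫ x in Ioo u v, |f x - (v - u)⁻¹ * ∫ t in Ioo u v, f t|

theorem memBMOpos_iff {f : ℝ → ℝ} :
    MemBMOpos f ↔ ∃ C : ℝ, ∀ u v : ℝ, 0 ≤ u → u < v → meanOscillation f u v ≤ C :=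
  Iff.rfl

theorem memBMOreal_iff {f : ℝ → ℝ} :
    MemBMOreal f ↔ ∃ C : ℝ, ∀ u v : ℝ, u < v → meanOscillation f u v ≤ C :=
  Iff.rfl

theorem meanOscillation_congr {f g : ℝ → ℝ} {u v : ℝ} (h : EqOn f g (Ioo u v)) :
    meanOscillation f u v = meanOscillation g u v := by
  unfold meanOscillation
  rw [setIntegral_congr_fun measurableSet_Ioo h]
  exact congrArg _ (setIntegral_congr_fun measurableSet_Ioo fun x hx => by rw [h hx])

theorem integral_abs_sub_average_le_two_mul {α : Type*} [MeasurableSpace α] (μ : Measure α)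
    [IsFiniteMeasure μ] {f : α → ℝ} (hf : Integrable f μ) (c : ℝ) :
    ∫ x, |f x - ⨍ y, f y ∂μ| ∂μ ≤ 2 * ∫ x, |f x - c| ∂μ := by
  set m := ⨍ y, f y ∂μ
  have hfc : Integrable (fun x => |f x - c|) μ := (hf.sub (integrable_const c)).abs
  have hmean : μ.real univ * |c - m| ≤ ∫ x, |f x - c| ∂μ :=
    calc μ.real univ * |c - m| = |∫ x, (f x - c) ∂μ| := by
          rw [integral_sub hf (integrable_const c), integral_const, ← measure_smul_average,
            smul_eq_mul, smul_eq_mul, ← mul_sub, abs_mul, abs_of_nonneg measureReal_nonneg,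
            abs_sub_comm]
      _ ≤ ∫ x, |f x - c| ∂μ := abs_integral_le_integral_abs
  calc ∫ x, |f x - m| ∂μ ≤ ∫ x, (|f x - c| + |c - m|) ∂μ :=
        integral_mono (hf.sub (integrable_const m)).abs (hfc.add (integrable_const _))
          fun x => abs_sub_le _ _ _
    _ = ∫ x, |f x - c| ∂μ + μ.real univ * |c - m| := by
        rw [integral_add hfc (integrable_const _), integral_const, smul_eq_mul]
    _ ≤ 2 * ∫ x, |f x - c| ∂μ := by linarith

theorem meanOscillation_le_two_mul {f : ℝ → ℝ} {u v : ℝ} (huv : u < v)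
    (hf : IntegrableOn f (Ioo u v)) (c : ℝ) :
    meanOscillation f u v ≤ 2 * ((v - u)⁻¹ * ∫ x in Ioo u v, |f x - c|) := by
  have havg : (v - u)⁻¹ * ∫ t in Ioo u v, f t = ⨍ t in Ioo u v, f t := by
    rw [setAverage_eq, Real.volume_real_Ioo_of_le huv.le, smul_eq_mul]
  have : IsFiniteMeasure (volume.restrict (Ioo u v)) :=
    isFiniteMeasure_restrict.2 measure_Ioo_lt_top.ne
  unfold meanOscillation
  rw [havg, mul_left_comm]
  exact mul_le_mul_of_nonneg_left (integral_abs_sub_average_le_two_mul _ hf c)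
    (inv_nonneg.2 (sub_nonneg.2 huv.le))

theorem integral_neg_self_eq_integral_add {E : Type*} [NormedAddCommGroup E] [NormedSpace ℝ E]
    {g : ℝ → E} {a : ℝ} (ha : 0 ≤ a) (hg : IntervalIntegrable g volume (-a) a) :
    ∫ x in -a..a, g x = ∫ x in 0..a, (g x + g (-x)) := by
  have hleft : IntervalIntegrable g volume (-a) 0 :=
    hg.mono_set (uIcc_subset_uIcc_left (by simp [uIcc_of_le, ha]))
  have hright : IntervalIntegrable g volume 0 a :=
    hg.mono_set (uIcc_subset_uIcc_right (by simp [uIcc_of_le, ha]))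
  have hleft' : IntervalIntegrable (fun x => g (-x)) volume 0 a := by
    simpa using (Iff.mp IntervalIntegrable.iff_comp_neg hleft).symm
  rw [← intervalIntegral.integral_add_adjacent_intervals hleft hright,
    intervalIntegral.integral_add hright hleft', intervalIntegral.integral_comp_neg, neg_zero,
    add_comm]

theorem meanOscillation_neg_self_of_odd {g : ℝ → ℝ} {a : ℝ} (hodd : ∀ x, g (-x) = -g x)
    (ha : 0 < a) (hg : IntervalIntegrable g volume (-a) a) :
    meanOscillation g (-a) a = a⁻¹ * ∫ x in 0..a, |g x| := by
  have hIoo (h : ℝ → ℝ) : ∫ x in Ioo (-a) a, h x = ∫ x in -a..a, h x := by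
    rw [intervalIntegral.integral_of_le (by linarith), integral_Ioc_eq_integral_Ioo]
  have hmean : ∫ x in -a..a, g x = 0 := by
    simp [integral_neg_self_eq_integral_add ha.le hg, hodd]
  have habs : ∫ x in -a..a, |g x| = 2 * ∫ x in 0..a, |g x| := by
    simp [integral_neg_self_eq_integral_add ha.le hg.abs, hodd, ← two_mul]
  unfold meanOscillation
  rw [hIoo, hIoo, hmean, mul_zero]
  simp only [sub_zero]
  rw [habs]
  field_simp
  ring

theorem oddExt_neg {f : ℝ → ℝ} (hf : f 0 = 0) (x : ℝ) : oddExt f (-x) = -oddExt f x := by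
  rcases lt_trichotomy x 0 with h | rfl | h
  · simp [oddExt, not_lt.2 h.le, neg_pos.2 h]
  · simp [oddExt, hf]
  · simp [oddExt, h, not_lt.2 (neg_nonpos.2 h.le)]

theorem intervalIntegrable_oddExt {f : ℝ → ℝ} (hf0 : f 0 = 0)
    (hf : ∀ x, 0 < x → IntervalIntegrable f volume 0 x) (a b : ℝ) :
    IntervalIntegrable (oddExt f) volume a b :=
  intervalIntegrable_of_odd (fun x => (oddExt_neg hf0 x).symm) fun x hx =>
    (intervalIntegrable_congr_uIoo fun y hy => by
      rw [uIoo_of_le hx.le] at hy; exact if_pos hy.1).2 (hf x hx)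

theorem memBMOpos_of_memBMOreal_oddExt {f : ℝ → ℝ} (h : MemBMOreal (oddExt f)) :
    MemBMOpos f := by
  obtain ⟨C, hC⟩ := memBMOreal_iff.1 h
  refine memBMOpos_iff.2 ⟨C, fun u v hu huv => ?_⟩
  rw [← meanOscillation_congr fun x hx => if_pos (hu.trans_lt hx.1)]
  exact hC u v huv

theorem integral_abs_log_of_le_one {a : ℝ} (ha0 : 0 ≤ a) (ha1 : a ≤ 1) :
    ∫ x in 0..a, |log x| = a - a * log a := by
  rw [intervalIntegral.integral_congr (g := fun x => -log x) fun x hx => by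
      rw [uIcc_of_le ha0] at hx; exact abs_of_nonpos (log_nonpos hx.1 (hx.2.trans ha1)),
    intervalIntegral.integral_neg, integral_log]
  simp

theorem log_memBMOpos : MemBMOpos log := by
  refine memBMOpos_iff.2 ⟨2, fun u v hu huv => ?_⟩
  have hlog : IntegrableOn log (Ioo u v) :=
    intervalIntegral.intervalIntegrable_log'.1.mono_set Ioo_subset_Ioc_self
  have hdist : ∫ x in Ioo u v, |log x - log v| = (v - u) - u * (log v - log u) := by
    rw [setIntegral_congr_fun measurableSet_Ioo (g := fun x => log v - log x) fun x hx => by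
        rw [abs_sub_comm]
        exact abs_of_nonneg (sub_nonneg.2 (log_le_log (hu.trans_lt hx.1) hx.2.le)),
      ← integral_Ioc_eq_integral_Ioo, ← intervalIntegral.integral_of_le huv.le,
      intervalIntegral.integral_sub intervalIntegrable_const
        intervalIntegral.intervalIntegrable_log',
      intervalIntegral.integral_const, integral_log, smul_eq_mul]
    ring
  have hend : 0 ≤ u * (log v - log u) := by
    rcases hu.eq_or_lt with rfl | hu'
    · simp
    · exact mul_nonneg hu (sub_nonneg.2 (log_le_log hu' huv.le))
  have hvu : 0 < v - u := sub_pos.2 huv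
  calc meanOscillation log u v ≤ 2 * ((v - u)⁻¹ * ((v - u) - u * (log v - log u))) := by
        simpa [hdist] using meanOscillation_le_two_mul huv hlog (log v)
    _ ≤ 2 * ((v - u)⁻¹ * (v - u)) := by
        gcongr 2 * (_ * ?_)
        linarith
    _ = 2 := by field_simp

theorem meanOscillation_oddExt_log {a : ℝ} (ha0 : 0 < a) (ha1 : a ≤ 1) :
    meanOscillation (oddExt log) (-a) a = 1 - log a := by
  have habs (x : ℝ) : |oddExt log x| = |log x| := by
    unfold oddExt; split_ifs <;> simp
  rw [meanOscillation_neg_self_of_odd (oddExt_neg log_zero) ha0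
      (intervalIntegrable_oddExt log_zero
        (fun _ _ => intervalIntegral.intervalIntegrable_log') _ _)]
  simp only [habs]
  rw [integral_abs_log_of_le_one ha0.le ha1]
  field_simp

theorem oddExt_log_not_memBMOreal : ¬ MemBMOreal (oddExt log) := by
  intro h
  obtain ⟨C, hC⟩ := memBMOreal_iff.1 h
  have ha0 : 0 < exp (-|C|) := exp_pos _
  have ha1 : exp (-|C|) ≤ 1 := exp_le_one_iff.2 (neg_nonpos.2 (abs_nonneg C))
  have := hC _ _ (neg_lt_self ha0)
  rw [meanOscillation_oddExt_log ha0 ha1, log_exp] at this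
  linarith [le_abs_self C]

/-- `b₀ = log` belongs to `BMO(ℝ₊,dx)`, its odd extension does not belong to `BMO(ℝ,dx)`,
and hence `BMO_o(ℝ₊,dx) = {f : f_o ∈ BMO(ℝ)}` is a proper subset of `BMO(ℝ₊,dx)`. -/
theorem log_in_BMO_not_in_BMOo :
    MemBMOpos Real.log ∧ ¬ MemBMOreal (oddExt Real.log) ∧
    {f : ℝ → ℝ | MemBMOreal (oddExt f)} ⊂ {f : ℝ → ℝ | MemBMOpos f} :=
  ⟨log_memBMOpos, oddExt_log_not_memBMOreal,
    (ssubset_iff_of_subset fun _ => memBMOpos_of_memBMOreal_oddExt).2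
      ⟨log, log_memBMOpos, oddExt_log_not_memBMOreal⟩⟩
end
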